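/- Let F satisfy the tangential cone condition on B with constant 0 ≤ c_tc < 1 and ‖F'(x)‖ ≤ c_F on B with c_F > 0, let y, y^δ ∈ Y with ‖y − y^δ‖ ≤ δ, δ > 0, and let τ > (1 + c_tc)/(1 − c_tc). Let p > 1, j_p a duality selection on X, j_q an inverse duality selection with X* p*-smooth with constant G > 0, and j_2 a selection of J_2^Y. Let x_n, z ∈ B with F(z) = y, R_n := F(x_n) − y^δ, and assume ‖R_n‖ > τδ. Put w := j_2(R_n), u* := w ∘ F'(x_n), α := ⟨u*, x_n⟩ − ‖R_n‖², ξ := (δ + c_tc(‖R_n‖ + δ))‖R_n‖. Then ⟨u*, x_n⟩ > α + ξ, ⟨u*, z⟩ ≤ α + ξ, and for t̃ := ((⟨u*, x_n⟩ − (α + ξ))/(G‖u*‖^{p*}))^{p−1} and x̃ := j_q(j_p(x_n) − t̃·u*), one has D_p(x̃, z) ≤ D_p(x_n, z) − ((1 − c_tc − τ^{−1}(1 + c_tc))^p/(p·G^{p−1}·c_F^p))·‖R_n‖^p. -/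

import Mathlib

/-- The Bregman distance associated with a selection `jp` of the duality mapping
`J_p^X`. -/
noncomputable def bregmanDist {X : Type*} [NormedAddCommGroup X] [NormedSpace ℝ X]
    (p : ℝ) (jp : X → StrongDual ℝ X) (x x' : X) : ℝ :=
  (1 / p) * ‖x'‖ ^ p - (1 / p) * ‖x‖ ^ p - jp x (x' - x)

/-!
Testing the tangential cone condition at `(xₙ, z)` against `w = j₂(Rₙ)` places `z` below the
hyperplane `⟨u*, ·⟩ = α + ξ`, while `xₙ` lies above it by a gap `S ≥ κ ‖Rₙ‖²`, where
`κ = 1 - c_tc - τ⁻¹ (1 + c_tc)` is positive by the choice of `τ`.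

In the dual, `x̃` is obtained from `xₙ` by a step of length `t̃` along `-u*`. Writing
`D_p(x, z) = ‖z‖ᵖ/p + ‖j_p x‖^{p*}/p* - ⟨j_p x, z⟩`, the `p*`-smoothness of `X*` bounds the
decrease of the Bregman distance from below by `t̃ S - (G/p*) t̃^{p*} ‖u*‖^{p*}`; the chosen `t̃`
maximises this and gives `Sᵖ / (p G^{p-1} ‖u*‖ᵖ)`, which `‖u*‖ ≤ c_F ‖Rₙ‖` bounds from below.
-/

section Bregman

variable {X : Type*} [NormedAddCommGroup X] [NormedSpace ℝ X] {p q : ℝ}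
  {jp : X → StrongDual ℝ X}

theorem bregmanDist_eq_dual (hpq : p.HolderConjugate q)
    (hjp : ∀ v : X, jp v v = ‖v‖ ^ p ∧ ‖jp v‖ = ‖v‖ ^ (p - 1)) (x z : X) :
    bregmanDist p jp x z = 1 / p * ‖z‖ ^ p + 1 / q * ‖jp x‖ ^ q - jp x z := by
  have hnorm : ‖jp x‖ ^ q = ‖x‖ ^ p := by
    rw [(hjp x).2, ← Real.rpow_mul (norm_nonneg x), hpq.sub_one_mul_conj]
  rw [bregmanDist, map_sub, (hjp x).1, hnorm]
  simp only [one_div, ← hpq.one_sub_inv]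
  ring

theorem bregmanDist_dualStep_le {jq : StrongDual ℝ X → X} {G : ℝ} (hpq : p.HolderConjugate q)
    (hjp : ∀ v : X, jp v v = ‖v‖ ^ p ∧ ‖jp v‖ = ‖v‖ ^ (p - 1))
    (hinv1 : ∀ xs : StrongDual ℝ X, jp (jq xs) = xs) (hinv2 : ∀ x : X, jq (jp x) = x)
    (hsmooth : ∀ xs ys : StrongDual ℝ X,
      (1 / q) * ‖xs - ys‖ ^ q ≤ (1 / q) * ‖xs‖ ^ q - ys (jq xs) + (G / q) * ‖ys‖ ^ q)
    (x z : X) (u : StrongDual ℝ X) {t : ℝ} (ht : 0 ≤ t) :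
    bregmanDist p jp (jq (jp x - t • u)) z ≤
      bregmanDist p jp x z - t * (u x - u z) + G / q * t ^ q * ‖u‖ ^ q := by
  have hsm := hsmooth (jp x) (t • u)
  rw [hinv2, norm_smul, Real.norm_of_nonneg ht, Real.mul_rpow ht (norm_nonneg u)] at hsm
  rw [bregmanDist_eq_dual hpq hjp, bregmanDist_eq_dual hpq hjp, hinv1]
  simp only [sub_apply, smul_apply, smul_eq_mul] at hsm ⊢
  linarith

end Bregman

theorem optimal_step_gain_eq {p q G N S : ℝ} (hpq : p.HolderConjugate q) (hG : 0 < G)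
    (hN : 0 < N) (hS : 0 < S) :
    (S / (G * N ^ q)) ^ (p - 1) * S - G / q * ((S / (G * N ^ q)) ^ (p - 1)) ^ q * N ^ q =
      S ^ p / (p * G ^ (p - 1) * N ^ p) := by
  set A := G * N ^ q with hA_def
  have hA : 0 < A := by positivity
  have hApow : A ^ (p - 1) = G ^ (p - 1) * N ^ p := by
    rw [Real.mul_rpow hG.le (by positivity), ← Real.rpow_mul hN.le, mul_comm q,
      hpq.sub_one_mul_conj]
  have htS : (S / A) ^ (p - 1) * S = S ^ p / A ^ (p - 1) := by
    rw [Real.div_rpow hS.le hA.le, div_mul_eq_mul_div, ← Real.rpow_add_one hS.ne', sub_add_cancel]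
  have htq : ((S / A) ^ (p - 1)) ^ q = S ^ p / (A ^ (p - 1) * A) := by
    rw [← Real.rpow_mul (by positivity), hpq.sub_one_mul_conj, Real.div_rpow hS.le hA.le,
      ← Real.rpow_add_one hA.ne', sub_add_cancel]
  rw [htS, htq, hApow, hA_def]
  field_simp [hpq.ne_zero, hpq.symm.ne_zero]
  linear_combination hpq.mul_eq_add

theorem optimal_step_gain_ge {p G N S κ r cF : ℝ} (hp : 0 < p) (hG : 0 < G) (hN : 0 < N)
    (hκ : 0 ≤ κ) (hr : 0 < r) (hcF : 0 < cF) (hS : κ * r ^ 2 ≤ S) (hNle : N ≤ r * cF) :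
    κ ^ p / (p * G ^ (p - 1) * cF ^ p) * r ^ p ≤ S ^ p / (p * G ^ (p - 1) * N ^ p) := by
  calc κ ^ p / (p * G ^ (p - 1) * cF ^ p) * r ^ p
      = (κ * r ^ 2) ^ p / (p * G ^ (p - 1) * (r * cF) ^ p) := by
        rw [Real.mul_rpow hκ (by positivity), Real.mul_rpow hr.le hcF.le,
          ← Real.rpow_pow_comm hr.le]
        field_simp
    _ ≤ S ^ p / (p * G ^ (p - 1) * N ^ p) := by
        have : 0 ≤ S := (by positivity : 0 ≤ κ * r ^ 2).trans hS
        gcongr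

theorem one_sub_sub_inv_mul_pos {c τ : ℝ} (hτ0 : 0 < τ) (hc : c < 1)
    (hτ : (1 + c) / (1 - c) < τ) :
    0 < 1 - c - τ⁻¹ * (1 + c) := by
  rw [div_lt_iff₀ (sub_pos.2 hc)] at hτ
  have : τ⁻¹ * (1 + c) < 1 - c := by
    rw [inv_mul_eq_div, div_lt_iff₀ hτ0]
    linarith
  linarith

theorem one_sub_sub_inv_mul_mul_sq_le {c τ δ r : ℝ} (hc : 0 ≤ c) (hτ : 0 < τ) (hr : 0 ≤ r)
    (hδr : τ * δ ≤ r) :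
    (1 - c - τ⁻¹ * (1 + c)) * r ^ 2 ≤ r ^ 2 - (δ + c * (r + δ)) * r := by
  have hδ : δ ≤ τ⁻¹ * r := by rwa [le_inv_mul_iff₀ hτ]
  have key : r ^ 2 - (δ + c * (r + δ)) * r - (1 - c - τ⁻¹ * (1 + c)) * r ^ 2
      = (1 + c) * r * (τ⁻¹ * r - δ) := by ring
  linarith [mul_nonneg (mul_nonneg (by linarith : (0:ℝ) ≤ 1 + c) hr) (sub_nonneg.2 hδ)]

section Stripe

variable {X Y : Type*} [NormedAddCommGroup X] [NormedSpace ℝ X]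
  [NormedAddCommGroup Y] [NormedSpace ℝ Y]

theorem norm_linearizedResidual_le {A : X →L[ℝ] Y} {x z : X} {Fx y yδ : Y} {c δ : ℝ}
    (hc : 0 ≤ c) (htcc : ‖Fx - y - A (x - z)‖ ≤ c * ‖Fx - y‖) (hnoise : ‖y - yδ‖ ≤ δ) :
    ‖A (z - x) + (Fx - yδ)‖ ≤ δ + c * (‖Fx - yδ‖ + δ) := by
  have hFy : ‖Fx - y‖ ≤ ‖Fx - yδ‖ + δ := by
    calc ‖Fx - y‖ ≤ ‖Fx - yδ‖ + ‖yδ - y‖ := norm_sub_le_norm_sub_add_norm_sub _ _ _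
      _ ≤ ‖Fx - yδ‖ + δ := by rw [norm_sub_rev yδ]; gcongr
  have hsplit : A (z - x) + (Fx - yδ) = (Fx - y - A (x - z)) + (y - yδ) := by
    rw [map_sub, map_sub]; abel
  calc ‖A (z - x) + (Fx - yδ)‖ ≤ ‖Fx - y - A (x - z)‖ + ‖y - yδ‖ := hsplit ▸ norm_add_le _ _
    _ ≤ c * (‖Fx - yδ‖ + δ) + δ := by gcongr; exact htcc.trans (by gcongr)
    _ = δ + c * (‖Fx - yδ‖ + δ) := add_comm _ _

theorem comp_apply_le_of_tangentialCone {A : X →L[ℝ] Y} {w : StrongDual ℝ Y} {x z : X}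
    {Fx y yδ : Y} {c δ : ℝ} (hwR : w (Fx - yδ) = ‖Fx - yδ‖ ^ 2) (hw : ‖w‖ = ‖Fx - yδ‖) (hc : 0 ≤ c)
    (htcc : ‖Fx - y - A (x - z)‖ ≤ c * ‖Fx - y‖) (hnoise : ‖y - yδ‖ ≤ δ) :
    (w.comp A) z ≤ (w.comp A) x - ‖Fx - yδ‖ ^ 2 + (δ + c * (‖Fx - yδ‖ + δ)) * ‖Fx - yδ‖ := by
  have hlin : (w.comp A) z - (w.comp A) x + ‖Fx - yδ‖ ^ 2 = w (A (z - x) + (Fx - yδ)) := by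
    rw [map_add, hwR, map_sub, map_sub]; rfl
  have hbound : w (A (z - x) + (Fx - yδ)) ≤ ‖Fx - yδ‖ * (δ + c * (‖Fx - yδ‖ + δ)) :=
    calc w (A (z - x) + (Fx - yδ)) ≤ ‖w‖ * ‖A (z - x) + (Fx - yδ)‖ :=
          (Real.le_norm_self _).trans (w.le_opNorm _)
      _ ≤ ‖Fx - yδ‖ * (δ + c * (‖Fx - yδ‖ + δ)) := by
        rw [hw]; gcongr; exact norm_linearizedResidual_le hc htcc hnoise
  linarith

end Stripe

theorem resesop_noisy_data_descent_general
    {X Y : Type*} [NormedAddCommGroup X] [NormedSpace ℝ X]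
    [NormedAddCommGroup Y] [NormedSpace ℝ Y]
    (F : X → Y) (F' : X → X →L[ℝ] Y) (x₀ : X) (ρ : ℝ)
    (ctc : ℝ) (hctc0 : 0 ≤ ctc) (hctc1 : ctc < 1)
    (htcc : ∀ x ∈ Metric.ball x₀ ρ, ∀ x' ∈ Metric.ball x₀ ρ,
      ‖F x - F x' - F' x (x - x')‖ ≤ ctc * ‖F x - F x'‖)
    (cF : ℝ) (hcF : 0 < cF) (hFbd : ∀ x ∈ Metric.ball x₀ ρ, ‖F' x‖ ≤ cF)
    (y yδ : Y) (δ : ℝ) (hδ : 0 < δ) (hnoise : ‖y - yδ‖ ≤ δ)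
    (τ : ℝ) (hτ : (1 + ctc) / (1 - ctc) < τ)
    (p q : ℝ) (hp : 1 < p) (hpq : 1 / p + 1 / q = 1)
    (jp : X → StrongDual ℝ X) (jq : StrongDual ℝ X → X)
    (hjp : ∀ v : X, jp v v = ‖v‖ ^ p ∧ ‖jp v‖ = ‖v‖ ^ (p - 1))
    (hinv1 : ∀ xs : StrongDual ℝ X, jp (jq xs) = xs)
    (hinv2 : ∀ x : X, jq (jp x) = x)
    (G : ℝ) (hG : 0 < G)
    (hsmooth : ∀ xs ys : StrongDual ℝ X,
      (1 / q) * ‖xs - ys‖ ^ q ≤ (1 / q) * ‖xs‖ ^ q - ys (jq xs) + (G / q) * ‖ys‖ ^ q)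
    (j2 : Y → StrongDual ℝ Y)
    (hj2 : ∀ v : Y, j2 v v = ‖v‖ ^ 2 ∧ ‖j2 v‖ = ‖v‖)
    (xn z : X) (hxn : xn ∈ Metric.ball x₀ ρ) (hz : z ∈ Metric.ball x₀ ρ)
    (hFz : F z = y) (hRn : τ * δ < ‖F xn - yδ‖)
    (w : StrongDual ℝ Y) (hw : w = j2 (F xn - yδ))
    (us : StrongDual ℝ X) (hus : us = w.comp (F' xn))
    (α ξ : ℝ) (hα : α = us xn - ‖F xn - yδ‖ ^ 2)
    (hξ : ξ = (δ + ctc * (‖F xn - yδ‖ + δ)) * ‖F xn - yδ‖)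
    (t : ℝ) (ht : t = ((us xn - (α + ξ)) / (G * ‖us‖ ^ q)) ^ (p - 1))
    (x' : X) (hx' : x' = jq (jp xn - t • us)) :
    α + ξ < us xn ∧
    us z ≤ α + ξ ∧
    bregmanDist p jp x' z ≤
      bregmanDist p jp xn z -
        ((1 - ctc - τ⁻¹ * (1 + ctc)) ^ p / (p * G ^ (p - 1) * cF ^ p)) *
          ‖F xn - yδ‖ ^ p := by
  have hpq' : p.HolderConjugate q :=
    Real.holderConjugate_iff.2 ⟨hp, by simpa only [one_div] using hpq⟩
  obtain ⟨hwR, hwn⟩ := hj2 (F xn - yδ)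
  rw [← hw] at hwR hwn
  have hτ0 : 0 < τ := (div_pos (by linarith) (by linarith)).trans hτ
  have hr : 0 < ‖F xn - yδ‖ := (mul_pos hτ0 hδ).trans hRn
  have hκ := one_sub_sub_inv_mul_pos hτ0 hctc1 hτ
  have hgap : (1 - ctc - τ⁻¹ * (1 + ctc)) * ‖F xn - yδ‖ ^ 2 ≤ us xn - (α + ξ) := by
    rw [hα, hξ]
    linarith [one_sub_sub_inv_mul_mul_sq_le hctc0 hτ0 hr.le hRn.le]
  have hS : 0 < us xn - (α + ξ) := lt_of_lt_of_le (by positivity) hgap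
  have hupper : us z ≤ α + ξ := by
    rw [hα, hξ, hus]
    refine comp_apply_le_of_tangentialCone hwR hwn hctc0 ?_ hnoise
    rw [← hFz]; exact htcc xn hxn z hz
  have hus_le : ‖us‖ ≤ ‖F xn - yδ‖ * cF := hus ▸ (w.opNorm_comp_le _).trans
    (mul_le_mul hwn.le (hFbd xn hxn) (norm_nonneg _) hr.le)
  have hsep : us z < us xn := hupper.trans_lt (by linarith)
  have hus_pos : 0 < ‖us‖ := norm_pos_iff.2 fun h0 => by
    simp only [h0, zero_apply, lt_irrefl] at hsep
  refine ⟨by linarith, hupper, ?_⟩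
  have ht0 : 0 ≤ t := ht ▸ by positivity
  have hstep : t * (us xn - (α + ξ)) ≤ t * (us xn - us z) := by gcongr
  calc bregmanDist p jp x' z
      ≤ bregmanDist p jp xn z - t * (us xn - us z) + G / q * t ^ q * ‖us‖ ^ q :=
        hx' ▸ bregmanDist_dualStep_le hpq' hjp hinv1 hinv2 hsmooth xn z us ht0
    _ ≤ bregmanDist p jp xn z - (t * (us xn - (α + ξ)) - G / q * t ^ q * ‖us‖ ^ q) := by
        linarith
    _ = bregmanDist p jp xn z - (us xn - (α + ξ)) ^ p / (p * G ^ (p - 1) * ‖us‖ ^ p) := by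
        rw [ht, optimal_step_gain_eq hpq' hG hus_pos hS]
    _ ≤ _ := by
        gcongr
        exact optimal_step_gain_ge hpq'.pos hG hus_pos hκ.le hr hcF hgap hus_le

/-- Descent property of one RESESOP step with the current gradient for noisy data:
as long as the discrepancy principle `‖R_n‖ > τδ` is not yet fulfilled, the iterate
lies strictly above the stripe, the exact solution lies below its upper bounding
hyperplane, and projecting onto that hyperplane yields the descent property. -/
theorem resesop_noisy_data_descent
    {X Y : Type*} [NormedAddCommGroup X] [NormedSpace ℝ X] [CompleteSpace X]
    [NormedAddCommGroup Y] [NormedSpace ℝ Y] [CompleteSpace Y]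
    (F : X → Y) (F' : X → X →L[ℝ] Y) (x₀ : X) (ρ : ℝ)
    (hdiff : ∀ x ∈ Metric.ball x₀ ρ, HasFDerivAt F (F' x) x)
    (ctc : ℝ) (hctc0 : 0 ≤ ctc) (hctc1 : ctc < 1)
    (htcc : ∀ x ∈ Metric.ball x₀ ρ, ∀ x' ∈ Metric.ball x₀ ρ,
      ‖F x - F x' - F' x (x - x')‖ ≤ ctc * ‖F x - F x'‖)
    (cF : ℝ) (hcF : 0 < cF) (hFbd : ∀ x ∈ Metric.ball x₀ ρ, ‖F' x‖ ≤ cF)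
    (y yδ : Y) (δ : ℝ) (hδ : 0 < δ) (hnoise : ‖y - yδ‖ ≤ δ)
    (τ : ℝ) (hτ : (1 + ctc) / (1 - ctc) < τ)
    (p q : ℝ) (hp : 1 < p) (hpq : 1 / p + 1 / q = 1)
    (jp : X → StrongDual ℝ X) (jq : StrongDual ℝ X → X)
    (hjp : ∀ v : X, jp v v = ‖v‖ ^ p ∧ ‖jp v‖ = ‖v‖ ^ (p - 1))
    (hinv1 : ∀ xs : StrongDual ℝ X, jp (jq xs) = xs)
    (hinv2 : ∀ x : X, jq (jp x) = x)
    (G : ℝ) (hG : 0 < G)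
    (hsmooth : ∀ xs ys : StrongDual ℝ X,
      (1 / q) * ‖xs - ys‖ ^ q ≤ (1 / q) * ‖xs‖ ^ q - ys (jq xs) + (G / q) * ‖ys‖ ^ q)
    (j2 : Y → StrongDual ℝ Y)
    (hj2 : ∀ v : Y, j2 v v = ‖v‖ ^ 2 ∧ ‖j2 v‖ = ‖v‖)
    (xn z : X) (hxn : xn ∈ Metric.ball x₀ ρ) (hz : z ∈ Metric.ball x₀ ρ)
    (hFz : F z = y) (hRn : τ * δ < ‖F xn - yδ‖)
    (w : StrongDual ℝ Y) (hw : w = j2 (F xn - yδ))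
    (us : StrongDual ℝ X) (hus : us = w.comp (F' xn))
    (α ξ : ℝ) (hα : α = us xn - ‖F xn - yδ‖ ^ 2)
    (hξ : ξ = (δ + ctc * (‖F xn - yδ‖ + δ)) * ‖F xn - yδ‖)
    (t : ℝ) (ht : t = ((us xn - (α + ξ)) / (G * ‖us‖ ^ q)) ^ (p - 1))
    (x' : X) (hx' : x' = jq (jp xn - t • us)) :
    α + ξ < us xn ∧
    us z ≤ α + ξ ∧
    bregmanDist p jp x' z ≤
      bregmanDist p jp xn z -
        ((1 - ctc - τ⁻¹ * (1 + ctc)) ^ p / (p * G ^ (p - 1) * cF ^ p)) *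
          ‖F xn - yδ‖ ^ p :=
  resesop_noisy_data_descent_general F F' x₀ ρ ctc hctc0 hctc1 htcc cF hcF hFbd y yδ δ hδ hnoise τ
    hτ p q hp hpq jp jq hjp hinv1 hinv2 G hG hsmooth j2 hj2 xn z hxn hz hFz hRn w hw us hus α ξ hα
    hξ t ht x' hx'
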